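/- arXiv:2006.15685 — 4 statements merged into one kernel-verified Lean document; each statement's English description precedes it below -/
import Mathlib

section
/- Let m : ℕ and E = EuclideanSpace ℝ (Fin m). Let R : E → ℝ be differentiable and let φ : E → E be differentiable and satisfy gradient R (φ v) = v for every v ∈ E (i.e., φ is a right inverse of the gradient map ρ = ∇R). Define Ψ : E → ℝ by Ψ(v) = ⟪v, φ v⟫ − R (φ v). Then Ψ is differentiable and gradient Ψ v = φ v for all v ∈ E. -/
/-!
Differentiating `Ψ v = ⟪v, φ v⟫ - R (φ v)` in direction `h` gives
`⟪h, φ v⟫ + ⟪v, Dφ h⟫ - ⟪∇R (φ v), Dφ h⟫`, and the last two terms cancel because `∇R (φ v) = v`.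
-/

open scoped RealInnerProductSpace

theorem hasGradientAt_inner_self_sub_comp {E : Type*} [NormedAddCommGroup E]
    [InnerProductSpace ℝ E] [CompleteSpace E] {R : E → ℝ} {φ : E → E} {v : E}
    (hR : HasGradientAt R v (φ v)) (hφ : DifferentiableAt ℝ φ v) :
    HasGradientAt (fun w => ⟪w, φ w⟫ - R (φ w)) (φ v) v := by
  rw [hasGradientAt_iff_hasFDerivAt] at hR ⊢
  have hpair := (hasFDerivAt_id v).inner ℝ hφ.hasFDerivAt
  have hcomp := hR.comp v hφ.hasFDerivAt
  refine (hpair.sub hcomp).congr_fderiv ?_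
  ext h
  simp [fderivInnerCLM, real_inner_comm]

theorem stmt_0 (m : ℕ)
    (R : EuclideanSpace ℝ (Fin m) → ℝ)
    (φ : EuclideanSpace ℝ (Fin m) → EuclideanSpace ℝ (Fin m))
    (hR : Differentiable ℝ R) (hφ : Differentiable ℝ φ)
    (hinv : ∀ v, gradient R (φ v) = v)
    (Ψ : EuclideanSpace ℝ (Fin m) → ℝ)
    (hΨ : ∀ v, Ψ v = ⟪v, φ v⟫ - R (φ v)) :
    Differentiable ℝ Ψ ∧ ∀ v, gradient Ψ v = φ v := by
  have hgrad : ∀ v, HasGradientAt Ψ (φ v) v := fun v => by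
    have hRv : HasGradientAt R v (φ v) := by simpa only [hinv] using (hR (φ v)).hasGradientAt
    rw [funext hΨ]
    exact hasGradientAt_inner_self_sub_comp hRv (hφ v)
  exact ⟨fun v => (hgrad v).differentiableAt, fun v => (hgrad v).gradient⟩
end

section
/- Let n : ℕ, E = EuclideanSpace ℝ (Fin n), and k ≥ 1. Let h : E → E be continuously differentiable and positively homogeneous of degree k, i.e., h (t • x) = t^k • h x for all t > 0 and all x ∈ E. Suppose that for every x ∈ E the Fréchet derivative fderiv ℝ h x is self-adjoint: ⟪(fderiv ℝ h x) v, w⟫ = ⟪v, (fderiv ℝ h x) w⟫ for all v, w ∈ E. Then the function V : E → ℝ defined by V(x) = ⟪x, h x⟫ / (k + 1) satisfies gradient V x = h x for all x ∈ E. -/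
open scoped RealInnerProductSpace

/-!
Differentiating `h (t • x) = t ^ k • h x` at `t = 1` gives Euler's identity `Dh(x) x = k • h x`.
The derivative of `x ↦ ⟪x, h x⟫` is `w ↦ ⟪w, h x⟫ + ⟪x, Dh(x) w⟫`, and symmetry of `Dh(x)` turns
the second term into `⟪Dh(x) x, w⟫`, so the gradient is `h x + Dh(x) x = (k + 1) • h x`.
-/

theorem HasFDerivAt.apply_self_of_homogeneous {E F : Type*} [NormedAddCommGroup E]
    [NormedSpace ℝ E] [NormedAddCommGroup F] [NormedSpace ℝ F] {f : E → F} {f' : E →L[ℝ] F}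
    {x : E} (k : ℕ) (hf : HasFDerivAt f f' x) (hhom : ∀ t : ℝ, 0 < t → f (t • x) = t ^ k • f x) :
    f' x = (k : ℝ) • f x := by
  have hray : HasDerivAt (fun t : ℝ => f (t • x)) (f' x) 1 := by
    have hline : HasDerivAt (fun t : ℝ => t • x) x 1 := by
      simpa using (hasDerivAt_id (1 : ℝ)).smul_const x
    exact (one_smul ℝ x ▸ hf).comp_hasDerivAt 1 hline
  have hpow : HasDerivAt (fun t : ℝ => t ^ k • f x) ((k : ℝ) • f x) 1 := by
    simpa using (hasDerivAt_pow k (1 : ℝ)).smul_const (f x)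
  have hfun : (fun t : ℝ => t ^ k • f x) =ᶠ[nhds 1] fun t => f (t • x) := by
    filter_upwards [Ioi_mem_nhds one_pos] with t ht
    exact (hhom t ht).symm
  exact hray.unique (hpow.congr_of_eventuallyEq hfun.symm)

section Gradient

variable {E : Type*} [NormedAddCommGroup E] [InnerProductSpace ℝ E] [CompleteSpace E]

theorem HasGradientAt.const_mul {f : E → ℝ} {f' x : E} (c : ℝ) (hf : HasGradientAt f f' x) :
    HasGradientAt (fun y => c * f y) (c • f') x := by
  rw [hasGradientAt_iff_hasFDerivAt, map_smul]
  exact hf.hasFDerivAt.const_mul c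

theorem HasFDerivAt.hasGradientAt_inner_self_of_isSymmetric {h : E → E} {h' : E →L[ℝ] E} {x : E}
    (hh : HasFDerivAt h h' x) (hsym : (h' : E →ₗ[ℝ] E).IsSymmetric) :
    HasGradientAt (fun y => ⟪y, h y⟫) (h x + h' x) x := by
  rw [hasGradientAt_iff_hasFDerivAt]
  refine ((hasFDerivAt_id x).inner ℝ hh).congr_fderiv (ContinuousLinearMap.ext fun w => ?_)
  have hswap : ⟪x, h' w⟫ = ⟪h' x, w⟫ := (hsym x w).symm
  simp [hswap, real_inner_comm, add_comm]

end Gradient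

theorem stmt_3_general (n k : ℕ)
    (h : EuclideanSpace ℝ (Fin n) → EuclideanSpace ℝ (Fin n))
    (hC1 : ContDiff ℝ 1 h)
    (hhom : ∀ t : ℝ, 0 < t → ∀ x, h (t • x) = t ^ k • h x)
    (hsym : ∀ x v w, ⟪(fderiv ℝ h x) v, w⟫ = ⟪v, (fderiv ℝ h x) w⟫)
    (V : EuclideanSpace ℝ (Fin n) → ℝ)
    (hV : ∀ x, V x = ⟪x, h x⟫ / (k + 1)) :
    ∀ x, gradient V x = h x := by
  intro x
  have hx : HasFDerivAt h (fderiv ℝ h x) x := (hC1.differentiable one_ne_zero x).hasFDerivAt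
  have heuler := hx.apply_self_of_homogeneous k fun t ht => hhom t ht x
  have hgrad := (hx.hasGradientAt_inner_self_of_isSymmetric (hsym x)).const_mul ((k : ℝ) + 1)⁻¹
  have hVfun : V = fun y => ((k : ℝ) + 1)⁻¹ * ⟪y, h y⟫ := funext fun y => by
    rw [hV y, inv_mul_eq_div]
  have hsum : h x + (k : ℝ) • h x = ((k : ℝ) + 1) • h x := by module
  rw [hVfun, hgrad.gradient, heuler, hsum, smul_smul, inv_mul_cancel₀ (by positivity), one_smul]

theorem stmt_3 (n k : ℕ) (hk : 1 ≤ k)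
    (h : EuclideanSpace ℝ (Fin n) → EuclideanSpace ℝ (Fin n))
    (hC1 : ContDiff ℝ 1 h)
    (hhom : ∀ t : ℝ, 0 < t → ∀ x, h (t • x) = t ^ k • h x)
    (hsym : ∀ x v w, ⟪(fderiv ℝ h x) v, w⟫ = ⟪v, (fderiv ℝ h x) w⟫)
    (V : EuclideanSpace ℝ (Fin n) → ℝ)
    (hV : ∀ x, V x = ⟪x, h x⟫ / (k + 1)) :
    ∀ x, gradient V x = h x :=
  stmt_3_general n k h hC1 hhom hsym V hV
end

section
/- Let n : ℕ and F, P, T : Matrix (Fin n) (Fin n) ℝ. Suppose P is symmetric positive definite and satisfies the Lyapunov equation Fᵀ * P + P * F = −1; suppose T is symmetric positive definite with T * T = P. Then the transformed matrix F̂ := T * F * T⁻¹ satisfies F̂ + F̂ᵀ = −P⁻¹; in particular, −(F̂ + F̂ᵀ) is positive definite (the symmetric part of F̂ is negative definite). -/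
open Matrix

theorem stmt_9 (n : ℕ) (F P T : Matrix (Fin n) (Fin n) ℝ)
    (hPsymm : P.IsSymm) (hP : P.PosDef) (hLyap : Fᵀ * P + P * F = -1)
    (hTsymm : T.IsSymm) (hT : T.PosDef) (hTT : T * T = P) :
    (T * F * T⁻¹) + (T * F * T⁻¹)ᵀ = -P⁻¹ ∧
      (-((T * F * T⁻¹) + (T * F * T⁻¹)ᵀ)).PosDef := by
  have hTinv : IsUnit T.det := isUnit_iff_ne_zero.mpr hT.det_pos.ne'
  have hTi : T⁻¹ * T = 1 := nonsing_inv_mul T hTinv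
  have hiT : T * T⁻¹ = 1 := mul_nonsing_inv T hTinv
  have hTtr : Tᵀ = T := hTsymm
  have hPinv : P⁻¹ = T⁻¹ * T⁻¹ := by
    rw [← hTT, Matrix.mul_inv_rev]
  have key : (T * F * T⁻¹) + (T * F * T⁻¹)ᵀ = -P⁻¹ := by
    have h1 : (T * F * T⁻¹)ᵀ = T⁻¹ * Fᵀ * T := by
      rw [transpose_mul, transpose_mul, transpose_nonsing_inv, hTtr]
      noncomm_ring
    have h2 : T⁻¹ * (Fᵀ * P + P * F) * T⁻¹ = -P⁻¹ := by
      rw [hLyap, hPinv]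
      simp [Matrix.mul_assoc]
    calc (T * F * T⁻¹) + (T * F * T⁻¹)ᵀ
        = T⁻¹ * (P * F) * T⁻¹ + T⁻¹ * (Fᵀ * P) * T⁻¹ := by
          rw [h1, ← hTT]
          have e1 : T⁻¹ * (T * T * F) * T⁻¹ = T * F * T⁻¹ := by
            rw [show T⁻¹ * (T * T * F) = (T⁻¹ * T) * T * F by noncomm_ring, hTi]
            noncomm_ring
          have e2 : T⁻¹ * (Fᵀ * (T * T)) * T⁻¹ = T⁻¹ * Fᵀ * T := by
            rw [show T⁻¹ * (Fᵀ * (T * T)) * T⁻¹ = T⁻¹ * Fᵀ * T * (T * T⁻¹) by noncomm_ring, hiT]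
            noncomm_ring
          rw [e1, e2]
      _ = T⁻¹ * (Fᵀ * P + P * F) * T⁻¹ := by noncomm_ring
      _ = -P⁻¹ := h2
  refine ⟨key, ?_⟩
  rw [key, neg_neg]
  exact hP.inv
end

section
/- Let n, m : ℕ. Let f : (Fin n → ℝ) → (Fin n → ℝ), g : (Fin n → ℝ) → Matrix (Fin n) (Fin m) ℝ, Q : (Fin n → ℝ) → ℝ, p : (Fin n → ℝ) → (Fin n → ℝ), φ : (Fin m → ℝ) → (Fin m → ℝ), and R : (Fin m → ℝ) → ℝ with R (−u) = R u for all u. Define Ψ : (Fin m → ℝ) → ℝ by Ψ(v) = v ⬝ᵥ φ v − R (φ v), and define the feedback u* x := −φ ((g x)ᵀ.mulVec (p x)). If p satisfies the HJB equation p x ⬝ᵥ f x − Ψ ((g x)ᵀ.mulVec (p x)) + Q x = 0 for all x, then for all x: p x ⬝ᵥ (f x + (g x).mulVec (u* x)) + Q x + R (u* x) = 0. -/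
open Matrix

theorem stmt_11 (n m : ℕ)
    (f : (Fin n → ℝ) → (Fin n → ℝ))
    (g : (Fin n → ℝ) → Matrix (Fin n) (Fin m) ℝ)
    (Q : (Fin n → ℝ) → ℝ)
    (p : (Fin n → ℝ) → (Fin n → ℝ))
    (φ : (Fin m → ℝ) → (Fin m → ℝ))
    (R : (Fin m → ℝ) → ℝ)
    (hR : ∀ u, R (-u) = R u)
    (Ψ : (Fin m → ℝ) → ℝ)
    (hΨ : ∀ v, Ψ v = v ⬝ᵥ φ v - R (φ v))
    (ustar : (Fin n → ℝ) → (Fin m → ℝ))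
    (hu : ∀ x, ustar x = -φ ((g x)ᵀ.mulVec (p x)))
    (hHJB : ∀ x, p x ⬝ᵥ f x - Ψ ((g x)ᵀ.mulVec (p x)) + Q x = 0) :
    ∀ x, p x ⬝ᵥ (f x + (g x).mulVec (ustar x)) + Q x + R (ustar x) = 0 := by
  intro x
  have h := hHJB x
  rw [hΨ] at h
  have hd : p x ⬝ᵥ (g x).mulVec (φ ((g x)ᵀ.mulVec (p x)))
      = (g x)ᵀ.mulVec (p x) ⬝ᵥ φ ((g x)ᵀ.mulVec (p x)) := by
    rw [Matrix.dotProduct_mulVec, Matrix.mulVec_transpose]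
  rw [hu, hR, Matrix.mulVec_neg, dotProduct_add, dotProduct_neg, hd]
  linarith
end
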